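/- arXiv:2409.03619 — 4 statements merged into one kernel-verified Lean document; each statement's English description precedes it below -/
import Mathlib

section
/- Exact-penalty termination criterion: let μ ≥ 0 and let (X*, y*, λ*) be a global minimizer of the penalized problem. If eᵀy* = bᵀλ*, then (X*, y*) is a global optimum of the bilevel problem, i.e., (X*, y*) satisfies A vec(X*)+By* ≥ a and y* ∈ S(X*), and cᵀvec(X*)+dᵀy* ≤ cᵀvec(X)+dᵀy for every (X, y) with A vec(X)+By ≥ a and y ∈ S(X). -/
/-!
A penalized minimizer `(X*, y*, λ*)` with zero duality gap has `y*` optimal for the lower level by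
weak LP duality, since `λ*` is dual feasible. Conversely, for a bilevel-feasible `(X, y)`, LP
strong duality yields a dual solution `λ` with zero gap, so `(X, y, λ)` is feasible for the
penalized problem with vanishing penalty, and minimality of `(X*, y*, λ*)` compares the upper-level
objectives. Strong duality comes from Farkas' lemma, proved by eliminating one generator at a time.
-/

open Matrix

/-- Vectorization of a matrix. -/
def vecM {m n : ℕ} (X : Matrix (Fin m) (Fin n) ℝ) : Fin m × Fin n → ℝ :=
  fun ij => X ij.1 ij.2

/-- `y ∈ S(X)`: `y` is an optimal solution of the lower-level primal LP
`min {eᵀy : (C+X) y ≥ b}`. -/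
def LowerOpt {m n : ℕ} (C : Matrix (Fin m) (Fin n) ℝ) (e : Fin n → ℝ)
    (b : Fin m → ℝ) (X : Matrix (Fin m) (Fin n) ℝ) (y : Fin n → ℝ) : Prop :=
  (∀ i, b i ≤ ((C + X) *ᵥ y) i) ∧
  ∀ y' : Fin n → ℝ, (∀ i, b i ≤ ((C + X) *ᵥ y') i) → e ⬝ᵥ y ≤ e ⬝ᵥ y'

/-- Feasibility for the penalized problem. -/
def PenFeas {m n p : ℕ} (A : Matrix (Fin p) (Fin m × Fin n) ℝ)
    (B : Matrix (Fin p) (Fin n) ℝ) (a : Fin p → ℝ)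
    (C : Matrix (Fin m) (Fin n) ℝ) (e : Fin n → ℝ) (b : Fin m → ℝ)
    (X : Matrix (Fin m) (Fin n) ℝ) (y : Fin n → ℝ) (lam : Fin m → ℝ) : Prop :=
  (∀ i, a i ≤ (A *ᵥ vecM X + B *ᵥ y) i) ∧
  (∀ i, b i ≤ ((C + X) *ᵥ y) i) ∧
  ((C + X)ᵀ *ᵥ lam = e) ∧
  (∀ i, 0 ≤ lam i)

open Filter Topology

section Farkas

variable {κ : Type*} [Fintype κ]

/-- The projection onto the hyperplane `w⊥` along `r` (meaningful when `r ⬝ᵥ w ≠ 0`). -/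
noncomputable def projAlong (r w : κ → ℝ) : (κ → ℝ) →ₗ[ℝ] κ → ℝ where
  toFun u := u - (u ⬝ᵥ w / (r ⬝ᵥ w)) • r
  map_add' u v := by simp only [add_dotProduct, add_div, add_smul]; abel
  map_smul' c u := by simp only [smul_dotProduct, smul_eq_mul, mul_div_assoc, smul_sub,
    RingHom.id_apply, mul_smul]

theorem projAlong_apply (r w u : κ → ℝ) :
    projAlong r w u = u - (u ⬝ᵥ w / (r ⬝ᵥ w)) • r := rfl

theorem projAlong_self {r w : κ → ℝ} (h : r ⬝ᵥ w ≠ 0) : projAlong r w r = 0 := by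
  rw [projAlong_apply, div_self h, one_smul, sub_self]

/-- The transpose of the projection along `r` onto `w⊥` is the projection along `w` onto `r⊥`. -/
theorem projAlong_dotProduct (r w u w' : κ → ℝ) :
    projAlong r w u ⬝ᵥ w' = u ⬝ᵥ projAlong w r w' := by
  simp only [projAlong_apply, sub_dotProduct, dotProduct_sub, smul_dotProduct, dotProduct_smul,
    smul_eq_mul, dotProduct_comm w r, dotProduct_comm r w']
  ring

variable {m : ℕ} {r w e : κ → ℝ} {v : Fin m → κ → ℝ}

theorem exists_nonneg_cons_of_projAlong (hr : r ⬝ᵥ w < 0) (hv : ∀ i, 0 ≤ v i ⬝ᵥ w)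
    (he : e ⬝ᵥ w < 0) {lam : Fin m → ℝ} (hlam : 0 ≤ lam)
    (hsum : ∑ i, lam i • projAlong r w (v i) = projAlong r w e) :
    ∃ lam' : Fin (m + 1) → ℝ,
      0 ≤ lam' ∧ ∑ i, lam' i • (Fin.cons r v : Fin (m + 1) → κ → ℝ) i = e := by
  set x := e - ∑ i, lam i • v i
  have hx : x = (x ⬝ᵥ w / (r ⬝ᵥ w)) • r := by
    rw [← sub_eq_zero, ← projAlong_apply, map_sub, map_sum]
    simp only [map_smul, hsum, sub_self]
  have hxw : x ⬝ᵥ w < 0 := by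
    have : 0 ≤ (∑ i, lam i • v i) ⬝ᵥ w := by
      simp only [sum_dotProduct, smul_dotProduct, smul_eq_mul]
      exact Finset.sum_nonneg fun i _ => mul_nonneg (hlam i) (hv i)
    rw [sub_dotProduct]
    linarith
  refine ⟨Fin.cons (x ⬝ᵥ w / (r ⬝ᵥ w)) lam,
    Fin.le_cons.2 ⟨(div_pos_of_neg_of_neg hxw hr).le, hlam⟩, ?_⟩
  simp only [Fin.sum_univ_succ, Fin.cons_zero, Fin.cons_succ]
  rw [← hx, sub_add_cancel]

theorem exists_separating_cons_of_projAlong (hr : r ⬝ᵥ w ≠ 0) {w' : κ → ℝ}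
    (hv : ∀ i, 0 ≤ projAlong r w (v i) ⬝ᵥ w') (he : projAlong r w e ⬝ᵥ w' < 0) :
    ∃ w'', (∀ i, 0 ≤ (Fin.cons r v : Fin (m + 1) → κ → ℝ) i ⬝ᵥ w'') ∧ e ⬝ᵥ w'' < 0 := by
  refine ⟨projAlong w r w', Fin.forall_fin_succ.2 ⟨?_, fun i => ?_⟩, ?_⟩
  · rw [Fin.cons_zero, ← projAlong_dotProduct, projAlong_self hr, zero_dotProduct]
  · rw [Fin.cons_succ, ← projAlong_dotProduct]
    exact hv i
  · rwa [← projAlong_dotProduct]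

theorem farkas_alternative :
    ∀ {m : ℕ} (v : Fin m → κ → ℝ) (e : κ → ℝ),
      (∃ lam : Fin m → ℝ, 0 ≤ lam ∧ ∑ i, lam i • v i = e) ∨
        ∃ w, (∀ i, 0 ≤ v i ⬝ᵥ w) ∧ e ⬝ᵥ w < 0
  | 0, v, e => by
    by_cases he : e = 0
    · exact Or.inl ⟨0, le_rfl, by simp [he]⟩
    · refine Or.inr ⟨-e, finZeroElim, ?_⟩
      rw [dotProduct_neg, neg_neg_iff_pos]
      exact lt_of_le_of_ne (Finset.sum_nonneg fun i _ => mul_self_nonneg (e i))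
        (Ne.symm (dotProduct_self_eq_zero.not.mpr he))
  | m + 1, v, e => by
    rw [← Fin.cons_self_tail v]
    set r := v 0
    rcases farkas_alternative (Fin.tail v) e with ⟨lam, hlam, hsum⟩ | ⟨w, hw, hew⟩
    · refine Or.inl ⟨Fin.cons 0 lam, Fin.le_cons.2 ⟨le_rfl, hlam⟩, ?_⟩
      simpa [Fin.sum_univ_succ] using hsum
    by_cases hr : 0 ≤ r ⬝ᵥ w
    · exact Or.inr ⟨w, Fin.forall_fin_succ.2 ⟨hr, hw⟩, hew⟩
    push Not at hr
    -- Eliminate `r`: project along `r` onto `w⊥`, where `r` vanishes, and recurse.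
    rcases farkas_alternative (fun i => projAlong r w (Fin.tail v i)) (projAlong r w e) with
      ⟨lam, hlam, hsum⟩ | ⟨w', hw', hew'⟩
    · exact Or.inl (exists_nonneg_cons_of_projAlong hr hw hew hlam hsum)
    · exact Or.inr (exists_separating_cons_of_projAlong hr.ne hw' hew')

end Farkas

section Duality

variable {ι κ : Type*} [Fintype ι] [Fintype κ]

theorem weak_duality {M : Matrix ι κ ℝ} {b lam : ι → ℝ} {e y : κ → ℝ} (hlam : 0 ≤ lam)
    (hdual : Mᵀ *ᵥ lam = e) (hy : b ≤ M *ᵥ y) : b ⬝ᵥ lam ≤ e ⬝ᵥ y := by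
  rw [← hdual, mulVec_transpose, ← dotProduct_mulVec, dotProduct_comm b]
  exact dotProduct_le_dotProduct_of_nonneg_left hy hlam

theorem eventually_le_mulVec_add_smul {M : Matrix ι κ ℝ} {b : ι → ℝ} {y w : κ → ℝ}
    (hy : b ≤ M *ᵥ y) (hw : ∀ i, (M *ᵥ y) i = b i → 0 ≤ (M *ᵥ w) i) :
    ∀ᶠ t in 𝓝[>] (0 : ℝ), b ≤ M *ᵥ (y + t • w) := by
  simp only [Pi.le_def, mulVec_add, mulVec_smul, Pi.add_apply, Pi.smul_apply, smul_eq_mul]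
  refine eventually_all.2 fun i => ?_
  rcases (hy i).eq_or_lt with htight | hslack
  · filter_upwards [self_mem_nhdsWithin] with t ht
    linarith [mul_nonneg (le_of_lt ht) (hw i htight.symm)]
  · have hcont : Continuous fun t : ℝ => (M *ᵥ y) i + t * (M *ᵥ w) i := by fun_prop
    exact eventually_nhdsWithin_of_eventually_nhds
      (((hcont.tendsto' 0 _ (by simp)).eventually (lt_mem_nhds hslack)).mono fun t ht => ht.le)

variable {m : ℕ}

theorem strong_duality {M : Matrix (Fin m) κ ℝ} {b : Fin m → ℝ} {e y : κ → ℝ} (hy : b ≤ M *ᵥ y)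
    (hopt : ∀ y', b ≤ M *ᵥ y' → e ⬝ᵥ y ≤ e ⬝ᵥ y') :
    ∃ lam, 0 ≤ lam ∧ Mᵀ *ᵥ lam = e ∧ b ⬝ᵥ lam = e ⬝ᵥ y := by
  classical
  -- Farkas' lemma is applied to the rows of the active constraints only.
  rcases farkas_alternative (fun i => if (M *ᵥ y) i = b i then M i else 0) e with
    ⟨lam, hlam, hsum⟩ | ⟨w, hw, hew⟩
  · set lam' : Fin m → ℝ := fun i => if (M *ᵥ y) i = b i then lam i else 0
    have hvec : lam' ᵥ* M = e := by
      rw [vecMul_eq_sum, ← hsum]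
      refine Finset.sum_congr rfl fun i _ => ?_
      by_cases h : (M *ᵥ y) i = b i <;> simp [lam', h]
    have hslack : b ⬝ᵥ lam' = (M *ᵥ y) ⬝ᵥ lam' := by
      refine Finset.sum_congr rfl fun i _ => ?_
      by_cases h : (M *ᵥ y) i = b i <;> simp [lam', h]
    refine ⟨lam', fun i => ?_, by rw [mulVec_transpose, hvec], ?_⟩
    · simp only [lam']
      split_ifs
      exacts [hlam i, le_rfl]
    · rw [hslack, dotProduct_comm, dotProduct_mulVec, hvec]
  · have hactive : ∀ i, (M *ᵥ y) i = b i → 0 ≤ (M *ᵥ w) i := fun i h => by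
      have := hw i
      rwa [if_pos h] at this
    obtain ⟨t, hfeas, ht⟩ :=
      ((eventually_le_mulVec_add_smul hy hactive).and self_mem_nhdsWithin).exists
    have := hopt _ hfeas
    rw [dotProduct_add, dotProduct_smul, smul_eq_mul] at this
    exact absurd this (by linarith [mul_neg_of_pos_of_neg ht hew])

end Duality

theorem exact_penalty_termination_general (m n p : ℕ)
    (A : Matrix (Fin p) (Fin m × Fin n) ℝ) (B : Matrix (Fin p) (Fin n) ℝ)
    (c : Fin m × Fin n → ℝ) (d : Fin n → ℝ) (a : Fin p → ℝ)
    (C : Matrix (Fin m) (Fin n) ℝ) (e : Fin n → ℝ) (b : Fin m → ℝ)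
    (μ : ℝ)
    (Xs : Matrix (Fin m) (Fin n) ℝ) (ys : Fin n → ℝ) (lams : Fin m → ℝ)
    (hfeas : PenFeas A B a C e b Xs ys lams)
    (hmin : ∀ X y lam, PenFeas A B a C e b X y lam →
      c ⬝ᵥ vecM Xs + d ⬝ᵥ ys + μ * (e ⬝ᵥ ys - b ⬝ᵥ lams) ≤
        c ⬝ᵥ vecM X + d ⬝ᵥ y + μ * (e ⬝ᵥ y - b ⬝ᵥ lam))
    (hgap : e ⬝ᵥ ys = b ⬝ᵥ lams) :
    ((∀ i, a i ≤ (A *ᵥ vecM Xs + B *ᵥ ys) i) ∧ LowerOpt C e b Xs ys) ∧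
    (∀ (X : Matrix (Fin m) (Fin n) ℝ) (y : Fin n → ℝ),
      (∀ i, a i ≤ (A *ᵥ vecM X + B *ᵥ y) i) → LowerOpt C e b X y →
        c ⬝ᵥ vecM Xs + d ⬝ᵥ ys ≤ c ⬝ᵥ vecM X + d ⬝ᵥ y) := by
  obtain ⟨hupper, hlower, hdual, hlams⟩ := hfeas
  refine ⟨⟨hupper, hlower, fun y' hy' => hgap ▸ weak_duality hlams hdual hy'⟩, ?_⟩
  intro X y hXy ⟨hy, hopt⟩
  obtain ⟨lam, hlam, hdualX, hgapX⟩ := strong_duality hy hopt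
  have := hmin X y lam ⟨hXy, hy, hdualX, hlam⟩
  rwa [hgap, hgapX, sub_self, sub_self, mul_zero, add_zero, add_zero] at this

/-- Exact-penalty termination criterion: if `(X*, y*, λ*)` is a global
minimizer of the penalized problem (with penalty weight `μ ≥ 0`) and the
duality gap vanishes, `eᵀy* = bᵀλ*`, then `(X*, y*)` is a global optimum of
the bilevel problem. -/
theorem exact_penalty_termination (m n p : ℕ)
    (A : Matrix (Fin p) (Fin m × Fin n) ℝ) (B : Matrix (Fin p) (Fin n) ℝ)
    (c : Fin m × Fin n → ℝ) (d : Fin n → ℝ) (a : Fin p → ℝ)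
    (C : Matrix (Fin m) (Fin n) ℝ) (e : Fin n → ℝ) (b : Fin m → ℝ)
    (μ : ℝ) (hμ : 0 ≤ μ)
    (Xs : Matrix (Fin m) (Fin n) ℝ) (ys : Fin n → ℝ) (lams : Fin m → ℝ)
    (hfeas : PenFeas A B a C e b Xs ys lams)
    (hmin : ∀ X y lam, PenFeas A B a C e b X y lam →
      c ⬝ᵥ vecM Xs + d ⬝ᵥ ys + μ * (e ⬝ᵥ ys - b ⬝ᵥ lams) ≤
        c ⬝ᵥ vecM X + d ⬝ᵥ y + μ * (e ⬝ᵥ y - b ⬝ᵥ lam))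
    (hgap : e ⬝ᵥ ys = b ⬝ᵥ lams) :
    ((∀ i, a i ≤ (A *ᵥ vecM Xs + B *ᵥ ys) i) ∧ LowerOpt C e b Xs ys) ∧
    (∀ (X : Matrix (Fin m) (Fin n) ℝ) (y : Fin n → ℝ),
      (∀ i, a i ≤ (A *ᵥ vecM X + B *ᵥ y) i) → LowerOpt C e b X y →
        c ⬝ᵥ vecM Xs + d ⬝ᵥ ys ≤ c ⬝ᵥ vecM X + d ⬝ᵥ y) :=
  exact_penalty_termination_general m n p A B c d a C e b μ Xs ys lams hfeas hmin hgap
end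

section
/- Reduction of connecting lower-level constraints to the bilinear form: let C ∈ ℝ^{m×n}, D ∈ ℝ^{m×k}, e ∈ ℝ^n, b ∈ ℝ^m and x ∈ ℝ^k. Define Ĉ ∈ ℝ^{(m+2)×(n+1)} whose first m rows are [C 0], whose (m+1)-st row is (0,…,0,1), and whose (m+2)-nd row is (0,…,0,−1); define b̂ = (b, 1, −1) ∈ ℝ^{m+2}, ê = (e, 0) ∈ ℝ^{n+1}, and X̂(x) ∈ ℝ^{(m+2)×(n+1)} to be zero except that the first m entries of its last column equal Dx. Then: (i) for any y ∈ ℝ^n, y is an optimal solution of min{eᵀy : Cy + Dx ≥ b} if and only if (y, 1) is an optimal solution of min{êᵀŷ : (Ĉ + X̂(x))ŷ ≥ b̂}; and (ii) every optimal solution ŷ of the latter problem satisfies ŷ_{n+1} = 1. -/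
open Matrix

noncomputable section

/-- `Ĉ ∈ ℝ^{(m+2)×(n+1)}`: the first `m` rows are `[C 0]`, the `(m+1)`-st row
is `(0,…,0,1)`, and the `(m+2)`-nd row is `(0,…,0,−1)`. -/
def Chat {m n : ℕ} (C : Matrix (Fin m) (Fin n) ℝ) :
    Matrix (Fin (m + 2)) (Fin (n + 1)) ℝ :=
  Matrix.of
    (Fin.snoc
      (Fin.snoc (fun i : Fin m => Fin.snoc (C i) 0)
        (Fin.snoc (0 : Fin n → ℝ) 1))
      (Fin.snoc (0 : Fin n → ℝ) (-1)))

/-- `b̂ = (b, 1, −1) ∈ ℝ^{m+2}`. -/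
def bhat {m : ℕ} (b : Fin m → ℝ) : Fin (m + 2) → ℝ :=
  Fin.snoc (Fin.snoc b 1) (-1)

/-- `ê = (e, 0) ∈ ℝ^{n+1}`. -/
def ehat {n : ℕ} (e : Fin n → ℝ) : Fin (n + 1) → ℝ :=
  Fin.snoc e 0

/-- `X̂(x) ∈ ℝ^{(m+2)×(n+1)}`: zero except that the first `m` entries of the
last column equal `D x`. -/
def Xhat {m k : ℕ} (n : ℕ) (D : Matrix (Fin m) (Fin k) ℝ) (x : Fin k → ℝ) :
    Matrix (Fin (m + 2)) (Fin (n + 1)) ℝ :=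
  Matrix.of
    (Fin.snoc
      (Fin.snoc (fun i : Fin m => Fin.snoc (0 : Fin n → ℝ) ((D *ᵥ x) i))
        (0 : Fin (n + 1) → ℝ))
      (0 : Fin (n + 1) → ℝ))

lemma dot_snoc {n : ℕ} (u : Fin n → ℝ) (a : ℝ) (v : Fin (n + 1) → ℝ) :
    (Fin.snoc u a : Fin (n + 1) → ℝ) ⬝ᵥ v
      = u ⬝ᵥ (fun j => v j.castSucc) + a * v (Fin.last n) := by
  simp [dotProduct, Fin.sum_univ_castSucc]

lemma feas_iff {m n k : ℕ} (C : Matrix (Fin m) (Fin n) ℝ)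
    (D : Matrix (Fin m) (Fin k) ℝ) (b : Fin m → ℝ) (x : Fin k → ℝ)
    (yh : Fin (n + 1) → ℝ) :
    (∀ i, bhat b i ≤ ((Chat C + Xhat n D x) *ᵥ yh) i) ↔
      (yh (Fin.last n) = 1 ∧
        ∀ j, b j ≤ (C *ᵥ (fun i => yh i.castSucc) + D *ᵥ x) j) := by
  have hrow : ∀ j : Fin m,
      ((Chat C + Xhat n D x) *ᵥ yh) (j.castSucc.castSucc)
        = C j ⬝ᵥ (fun i => yh i.castSucc) + (D *ᵥ x) j * yh (Fin.last n) := by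
    intro j
    show ((Chat C + Xhat n D x) (j.castSucc.castSucc)) ⬝ᵥ yh = _
    have : (Chat C + Xhat n D x) (j.castSucc.castSucc)
        = Fin.snoc (C j) ((D *ᵥ x) j) := by
      funext i
      refine Fin.lastCases ?_ ?_ i <;>
        simp [Chat, Xhat, Matrix.add_apply]
    rw [this, dot_snoc]
  have hrow1 : ((Chat C + Xhat n D x) *ᵥ yh) ((Fin.last m).castSucc)
      = yh (Fin.last n) := by
    show ((Chat C + Xhat n D x) ((Fin.last m).castSucc)) ⬝ᵥ yh = _
    have : (Chat C + Xhat n D x) ((Fin.last m).castSucc)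
        = Fin.snoc (0 : Fin n → ℝ) 1 := by
      funext i
      refine Fin.lastCases ?_ ?_ i <;>
        simp [Chat, Xhat, Matrix.add_apply]
    rw [this, dot_snoc]; simp
  have hrow2 : ((Chat C + Xhat n D x) *ᵥ yh) (Fin.last (m + 1))
      = -yh (Fin.last n) := by
    show ((Chat C + Xhat n D x) (Fin.last (m + 1))) ⬝ᵥ yh = _
    have : (Chat C + Xhat n D x) (Fin.last (m + 1))
        = Fin.snoc (0 : Fin n → ℝ) (-1) := by
      funext i
      refine Fin.lastCases ?_ ?_ i <;>
        simp [Chat, Xhat, Matrix.add_apply]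
    rw [this, dot_snoc]; simp
  constructor
  · intro h
    have h1 := h ((Fin.last m).castSucc)
    have h2 := h (Fin.last (m + 1))
    rw [hrow1] at h1
    rw [hrow2] at h2
    simp only [bhat, Fin.snoc_last, Fin.snoc_castSucc] at h1 h2
    have hlast : yh (Fin.last n) = 1 := le_antisymm (by linarith) h1
    refine ⟨hlast, fun j => ?_⟩
    have hj := h (j.castSucc.castSucc)
    rw [hrow j] at hj
    simp only [bhat, Fin.snoc_castSucc] at hj
    rw [hlast] at hj
    simpa [Matrix.add_apply, Matrix.mulVec] using hj
  · rintro ⟨hlast, h⟩ i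
    refine Fin.lastCases ?_ (fun i => ?_) i
    · rw [hrow2, hlast]; simp [bhat]
    refine Fin.lastCases ?_ (fun j => ?_) i
    · rw [hrow1, hlast]; simp [bhat]
    · rw [hrow j, hlast]
      simpa [bhat, Matrix.add_apply, Matrix.mulVec] using h j

lemma ehat_dot {n : ℕ} (e : Fin n → ℝ) (yh : Fin (n + 1) → ℝ) :
    ehat e ⬝ᵥ yh = e ⬝ᵥ (fun i => yh i.castSucc) := by
  rw [ehat, dot_snoc]; ring

/-- Reduction of connecting lower-level constraints to the bilinear form:
(i) `y` is optimal for `min {eᵀy : Cy + Dx ≥ b}` iff `(y, 1)` is optimal for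
`min {êᵀŷ : (Ĉ + X̂(x)) ŷ ≥ b̂}`; (ii) every optimal solution `ŷ` of the
latter problem has last coordinate `1`. -/
theorem reduction_to_bilinear_form (m n k : ℕ)
    (C : Matrix (Fin m) (Fin n) ℝ) (D : Matrix (Fin m) (Fin k) ℝ)
    (e : Fin n → ℝ) (b : Fin m → ℝ) (x : Fin k → ℝ) :
    (∀ y : Fin n → ℝ,
      ((∀ i, b i ≤ (C *ᵥ y + D *ᵥ x) i) ∧
        ∀ y' : Fin n → ℝ, (∀ i, b i ≤ (C *ᵥ y' + D *ᵥ x) i) →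
          e ⬝ᵥ y ≤ e ⬝ᵥ y')
      ↔
      ((∀ i, bhat b i ≤ ((Chat C + Xhat n D x) *ᵥ Fin.snoc y 1) i) ∧
        ∀ yh : Fin (n + 1) → ℝ,
          (∀ i, bhat b i ≤ ((Chat C + Xhat n D x) *ᵥ yh) i) →
            ehat e ⬝ᵥ Fin.snoc y 1 ≤ ehat e ⬝ᵥ yh)) ∧
    (∀ yh : Fin (n + 1) → ℝ,
      ((∀ i, bhat b i ≤ ((Chat C + Xhat n D x) *ᵥ yh) i) ∧
        ∀ yh' : Fin (n + 1) → ℝ,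
          (∀ i, bhat b i ≤ ((Chat C + Xhat n D x) *ᵥ yh') i) →
            ehat e ⬝ᵥ yh ≤ ehat e ⬝ᵥ yh') →
      yh (Fin.last n) = 1) := by
  constructor
  · intro y
    constructor
    · rintro ⟨hf, hopt⟩
      constructor
      · rw [feas_iff]
        refine ⟨by simp, fun j => ?_⟩
        simpa [Fin.snoc_castSucc] using hf j
      · intro yh hyh
        rw [feas_iff] at hyh
        have := hopt (fun i => yh i.castSucc) hyh.2
        rw [ehat_dot, ehat_dot]
        simpa [Fin.snoc_castSucc] using this
    · rintro ⟨hf, hopt⟩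
      rw [feas_iff] at hf
      constructor
      · intro j
        have := hf.2 j
        simpa [Fin.snoc_castSucc] using this
      · intro y' hy'
        have hfeas : ∀ i, bhat b i ≤ ((Chat C + Xhat n D x) *ᵥ Fin.snoc y' 1) i := by
          rw [feas_iff]
          refine ⟨by simp, fun j => ?_⟩
          simpa [Fin.snoc_castSucc] using hy' j
        have := hopt _ hfeas
        rw [ehat_dot, ehat_dot] at this
        simpa [Fin.snoc_castSucc] using this
  · rintro yh ⟨hf, -⟩
    exact ((feas_iff C D b x yh).1 hf).1

end
end

section
/- Infeasibility of small |x| in the numerical example: for every x with |x| < 0.1, every optimal solution y of the lower-level problem at x satisfies y₂ > 1.5; hence no pair (x, y) with |x| < 0.1 is feasible for the bilevel example. -/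
/-- Infeasibility of small `|x|` in the numerical example: if `|x| < 0.1` and
`y = (y₁, y₂)` is an optimal solution of the lower-level problem at `x`, then
`y₂ > 1.5`; hence `(x, y)` is not feasible for the bilevel example. -/
theorem example_small_x_infeasible (x : ℝ) (hx : |x| < 0.1) (y1 y2 : ℝ)
    (hfeas : y1 ≥ 0 ∧ y2 ≥ 0 ∧ (0.5 + x) * y1 + y2 ≥ 3 ∧
      (1 - x) * y1 + 0.5 * y2 ≥ 3)
    (hopt : ∀ z1 z2 : ℝ, z1 ≥ 0 → z2 ≥ 0 →
      (0.5 + x) * z1 + z2 ≥ 3 → (1 - x) * z1 + 0.5 * z2 ≥ 3 →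
      y1 + y2 ≤ z1 + z2) :
    y2 > 1.5 ∧ ¬ (y2 ≤ 1.5) := by
  obtain ⟨hy1, hy2, hA, hB⟩ := hfeas
  obtain ⟨hx2, hx1⟩ := abs_lt.mp hx
  have hd : (0:ℝ) < 1 - 2*x := by linarith
  have hz := hopt (2/(1-2*x)) ((2-8*x)/(1-2*x))
    (by positivity)
    (div_nonneg (by linarith) hd.le)
    (by rw [ge_iff_le, ← sub_nonneg]; field_simp [show (1 - x*2) ≠ 0 by linarith]; ring_nf; nlinarith)
    (by rw [ge_iff_le, ← sub_nonneg]; field_simp [show (1 - x*2) ≠ 0 by linarith]; ring_nf; nlinarith)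
  have hS : (1-2*x)*(y1+y2) ≤ 4 - 8*x := by
    have h2 : 2/(1-2*x) + (2-8*x)/(1-2*x) = (4-8*x)/(1-2*x) := by
      field_simp; ring
    rw [h2] at hz
    rw [← le_div_iff₀' hd]
    calc (y1+y2) ≤ (4-8*x)/(1-2*x) := hz
    _ = (4-8*x)/(1-2*x) := rfl
  have key : y2 > 1.5 := by
    by_contra h
    push_neg at h
    nlinarith [mul_nonneg (by linarith : (0:ℝ) ≤ (0.5+x)*y1+y2-3) hd.le,
      mul_nonneg (by linarith : (0:ℝ) ≤ 1.5 - y2) (by nlinarith : (0:ℝ) ≤ (1-2*x)*(0.5-x)),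
      hS]
  exact ⟨key, not_le.mpr key⟩
end

section
/- Global optimality of the solution of the numerical example: the pair (x*, y*) = (0.1, (2.5, 1.5)) is a global optimum of the bilevel example; that is, y* is an optimal solution of the lower-level problem at x* with y*₂ ≤ 1.5, and every pair (x, y) such that y is an optimal solution of the lower-level problem at x and y₂ ≤ 1.5 satisfies |x| ≥ 0.1 = |x*|. -/
/-- Global optimality of the solution of the numerical example: the pair
`(x*, y*) = (0.1, (2.5, 1.5))` is a global optimum of the bilevel example:
`y*` is optimal for the lower-level problem at `x* = 0.1` with `y*₂ ≤ 1.5`,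
and every pair `(x, y)` such that `y` is optimal for the lower-level problem
at `x` and `y₂ ≤ 1.5` satisfies `|x| ≥ 0.1 = |x*|`. -/
theorem example_global_optimum :
    (((2.5 : ℝ) ≥ 0) ∧ ((1.5 : ℝ) ≥ 0) ∧
      ((0.5 + 0.1) * 2.5 + 1.5 ≥ (3 : ℝ)) ∧
      ((1 - 0.1) * 2.5 + 0.5 * 1.5 ≥ (3 : ℝ))) ∧
    (∀ z1 z2 : ℝ, z1 ≥ 0 → z2 ≥ 0 →
      (0.5 + 0.1) * z1 + z2 ≥ 3 → (1 - 0.1) * z1 + 0.5 * z2 ≥ 3 →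
      (2.5 + 1.5 : ℝ) ≤ z1 + z2) ∧
    ((1.5 : ℝ) ≤ 1.5) ∧
    (∀ x y1 y2 : ℝ,
      (y1 ≥ 0 ∧ y2 ≥ 0 ∧ (0.5 + x) * y1 + y2 ≥ 3 ∧
        (1 - x) * y1 + 0.5 * y2 ≥ 3) →
      (∀ z1 z2 : ℝ, z1 ≥ 0 → z2 ≥ 0 →
        (0.5 + x) * z1 + z2 ≥ 3 → (1 - x) * z1 + 0.5 * z2 ≥ 3 →
        y1 + y2 ≤ z1 + z2) →
      y2 ≤ 1.5 → |x| ≥ 0.1) ∧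
    (|(0.1 : ℝ)| = 0.1) := by
  refine ⟨⟨by norm_num, by norm_num, by norm_num, by norm_num⟩,
    ?_, le_refl _, ?_, by norm_num⟩
  · intro z1 z2 _ _ h1 h2
    linarith
  · intro x y1 y2 ⟨hy1, hy2, hA, hB⟩ hopt hle
    by_contra h
    push_neg at h
    rw [abs_lt] at h
    obtain ⟨hx1, hx2⟩ := h
    have hd : (1 : ℝ) - 2 * x > 0 := by linarith
    have hc : (0.5 : ℝ) + x > 0 := by linarith
    have hz1 : (2 : ℝ) / (1 - 2 * x) ≥ 0 := by positivity
    have hz2num : (2 : ℝ) - 8 * x > 0 := by linarith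
    have hz2 : ((2 : ℝ) - 8 * x) / (1 - 2 * x) ≥ 0 := by positivity
    have e1 : (0.5 + x) * ((2 : ℝ) / (1 - 2 * x)) + (2 - 8 * x) / (1 - 2 * x) = 3 := by
      field_simp
      rw [div_eq_iff (by linarith)]; ring
    have e2 : (1 - x) * ((2 : ℝ) / (1 - 2 * x)) + 0.5 * ((2 - 8 * x) / (1 - 2 * x)) = 3 := by
      field_simp
      rw [div_eq_iff (by linarith)]; ring
    have hv := hopt (2 / (1 - 2 * x)) ((2 - 8 * x) / (1 - 2 * x)) hz1 hz2
      (by rw [e1]) (by rw [e2])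
    have hsum : (2 : ℝ) / (1 - 2 * x) + (2 - 8 * x) / (1 - 2 * x) = (4 - 8 * x) / (1 - 2 * x) := by
      field_simp
      ring
    rw [hsum, le_div_iff₀ hd] at hv
    nlinarith [mul_pos hd hc, mul_le_mul_of_nonneg_left hle (le_of_lt hd),
      mul_le_mul_of_nonneg_right (le_of_lt hd) hy2, sq_nonneg x,
      mul_lt_mul_of_pos_left hx2 hd]
end
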